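/- For any type x, with the notation x̄ := x → I (I the trivial elementary type), one has Δ_{x̄} = Δ̄_x (the complement of Δ_x in the traceless Hermitian operators on H_x) and λ_{x̄} = 1/(λ_x d_x). -/

import Mathlib

open Matrix Kronecker
open scoped ComplexOrder

/-- Types of higher-order quantum theory. The trivial type `I` is `elem 1`. -/
inductive QT where
  | elem (n : ℕ)
  | arrow (x y : QT)

/-- The index type of the Hilbert space `H_x` associated to a type `x`. -/
def Idx : QT → Type
  | .elem n => Fin n
  | .arrow x y => Idx x × Idx y

instance idxFintype : (x : QT) → Fintype (Idx x)
  | .elem n => inferInstanceAs (Fintype (Fin n))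
  | .arrow x y =>
      letI := idxFintype x; letI := idxFintype y
      inferInstanceAs (Fintype (Idx x × Idx y))

instance idxDecEq : (x : QT) → DecidableEq (Idx x)
  | .elem n => inferInstanceAs (DecidableEq (Fin n))
  | .arrow x y =>
      letI := idxDecEq x; letI := idxDecEq y
      inferInstanceAs (DecidableEq (Idx x × Idx y))

/-- Partial trace over the first tensor factor. -/
noncomputable def ptrA {ι κ : Type} [Fintype ι]
    (M : Matrix (ι × κ) (ι × κ) ℂ) : Matrix κ κ ℂ :=
  fun k l => ∑ i : ι, M (i, k) (i, l)

/-- Deterministic events of type `x`, defined recursively: for elementary types,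
positive unit-trace operators; for `x → y`, positive operators `R` such that
`Tr_x[(Sᵀ ⊗ 1) R] ∈ Det y` for every `S ∈ Det x`. -/
noncomputable def Det : (x : QT) → Set (Matrix (Idx x) (Idx x) ℂ)
  | .elem n => {R | R.PosSemidef ∧ R.trace = 1}
  | .arrow x y =>
      setOf (fun (R : Matrix (Idx x × Idx y) (Idx x × Idx y) ℂ) =>
        R.PosSemidef ∧
        ∀ S ∈ Det x, ptrA ((Sᵀ ⊗ₖ (1 : Matrix (Idx y) (Idx y) ℂ)) * R) ∈ Det y)

/-- The real subspace of Hermitian operators. -/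
noncomputable def hermSub (ι : Type) [Fintype ι] [DecidableEq ι] :
    Submodule ℝ (Matrix ι ι ℂ) where
  carrier := {X | X.IsHermitian}
  add_mem' := fun ha hb => ha.add hb
  zero_mem' := Matrix.isHermitian_zero
  smul_mem' := fun c X hX => by
    show ((c • X)ᴴ = c • X)
    rw [Matrix.conjTranspose_smul, star_trivial, hX.eq]

/-- The real subspace of traceless Hermitian operators. -/
noncomputable def tlHermSub (ι : Type) [Fintype ι] [DecidableEq ι] :
    Submodule ℝ (Matrix ι ι ℂ) where
  carrier := {X | X.IsHermitian ∧ X.trace = 0}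
  add_mem' := fun ha hb => ⟨ha.1.add hb.1, by rw [trace_add, ha.2, hb.2, add_zero]⟩
  zero_mem' := ⟨Matrix.isHermitian_zero, Matrix.trace_zero ι ℂ⟩
  smul_mem' := fun c X hX =>
    ⟨by show ((c • X)ᴴ = c • X)
        rw [Matrix.conjTranspose_smul, star_trivial, hX.1.eq],
     by rw [trace_smul, hX.2, smul_zero]⟩

/-- The Hilbert–Schmidt orthogonal complement of `S` inside `B`. -/
noncomputable def perpWithin {ι : Type} [Fintype ι] [DecidableEq ι]
    (S B : Submodule ℝ (Matrix ι ι ℂ)) : Submodule ℝ (Matrix ι ι ℂ) where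
  carrier := {Z | Z ∈ B ∧ ∀ Y ∈ S, (Y * Z).trace = 0}
  add_mem' := fun ha hb =>
    ⟨B.add_mem ha.1 hb.1, fun Y hY => by
      rw [mul_add, trace_add, ha.2 Y hY, hb.2 Y hY, add_zero]⟩
  zero_mem' := ⟨B.zero_mem, fun Y _ => by simp⟩
  smul_mem' := fun c Z hZ =>
    ⟨B.smul_mem c hZ.1, fun Y hY => by
      rw [Matrix.mul_smul, trace_smul, hZ.2 Y hY, smul_zero]⟩

/-- Tensor product of operator subspaces, spanned by Kronecker products. -/
noncomputable def tensorSub {ι κ : Type} [Fintype ι] [DecidableEq ι]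
    [Fintype κ] [DecidableEq κ]
    (P : Submodule ℝ (Matrix ι ι ℂ)) (Q : Submodule ℝ (Matrix κ κ ℂ)) :
    Submodule ℝ (Matrix (ι × κ) (ι × κ) ℂ) :=
  Submodule.span ℝ {A | ∃ X ∈ P, ∃ Y ∈ Q, A = X ⊗ₖ Y}

/-- The one-dimensional subspace `L_e` spanned by the identity. -/
noncomputable def idSub (ι : Type) [Fintype ι] [DecidableEq ι] :
    Submodule ℝ (Matrix ι ι ℂ) :=
  Submodule.span ℝ {(1 : Matrix ι ι ℂ)}

/-- The subspace `Δ_x` of traceless Hermitian operators characterizing the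
deterministic events of type `x`:
`Δ_A = Traceless(H_A)` for elementary `A`, and
`Δ_{x→y} = [Herm(H_x) ⊗ Δ_y] ⊕ [Δ̄_x ⊗ Δ_y^⊥]`, where `Δ̄_x` is the complement of
`Δ_x` inside the traceless Hermitian operators and `Δ_y^⊥` its orthogonal
complement inside the Hermitian operators. -/
noncomputable def Delta : (x : QT) → Submodule ℝ (Matrix (Idx x) (Idx x) ℂ)
  | .elem n => tlHermSub (Fin n)
  | .arrow x y =>
      (tensorSub (hermSub (Idx x)) (Delta y) ⊔
        tensorSub (perpWithin (Delta x) (tlHermSub (Idx x)))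
          (perpWithin (Delta y) (hermSub (Idx y))) :
        Submodule ℝ (Matrix (Idx x × Idx y) (Idx x × Idx y) ℂ))

/-- The normalization constant `λ_x`: `λ_A = 1/d_A`, `λ_{x→y} = λ_y/(d_x λ_x)`. -/
noncomputable def lam : QT → ℝ
  | .elem n => 1 / n
  | .arrow x y => lam y / (Fintype.card (Idx x) * lam x)

/-! `Δ_I = 0`, so `Δ_I^⊥ = Herm(ℂ) = ℝ·1` and the first summand of `Δ_{x → I}` vanishes, while the
second is `Δ̄_x ⊗ ℝ·1 ≅ Δ̄_x`. The formula for `λ` is immediate from `λ_I = 1`. -/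

section

variable {ι κ : Type} [Fintype ι] [DecidableEq ι] [Fintype κ] [DecidableEq κ]

lemma tlHermSub_eq_bot [Unique ι] : tlHermSub ι = ⊥ := by
  refine eq_bot_iff.mpr fun M hM => (Submodule.mem_bot ℝ).mpr ?_
  have htr : M default default = 0 := by simpa [Matrix.trace] using hM.2
  ext i j
  rw [Subsingleton.elim i default, Subsingleton.elim j default, htr, Matrix.zero_apply]

lemma hermSub_eq_idSub [Unique ι] : hermSub ι = idSub ι := by
  refine le_antisymm (fun M hM => ?_) (Submodule.span_le.mpr ?_)
  · have hre : ((M default default).re : ℂ) = M default default :=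
      Complex.conj_eq_iff_re.mp (congrFun (congrFun hM.eq default) default)
    refine Submodule.mem_span_singleton.mpr ⟨(M default default).re, ?_⟩
    ext i j
    rw [Subsingleton.elim i default, Subsingleton.elim j default]
    simp [hre]
  · exact Set.singleton_subset_iff.mpr isHermitian_one

lemma perpWithin_bot (B : Submodule ℝ (Matrix ι ι ℂ)) : perpWithin ⊥ B = B := by
  ext Z
  refine ⟨fun h => h.1, fun hZ => ⟨hZ, fun Y hY => ?_⟩⟩
  rw [(Submodule.mem_bot ℝ).mp hY, zero_mul, trace_zero]

lemma tensorSub_bot (P : Submodule ℝ (Matrix ι ι ℂ)) :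
    tensorSub P (⊥ : Submodule ℝ (Matrix κ κ ℂ)) = ⊥ := by
  refine eq_bot_iff.mpr (Submodule.span_le.mpr ?_)
  rintro _ ⟨X, -, Y, hY, rfl⟩
  simp [(Submodule.mem_bot ℝ).mp hY]

lemma tensorSub_span_singleton (P : Submodule ℝ (Matrix ι ι ℂ)) (Y : Matrix κ κ ℂ) :
    tensorSub P (ℝ ∙ Y) = P.map ((kroneckerBilinear (R := ℝ) (α := ℂ)).flip Y) := by
  refine le_antisymm (Submodule.span_le.mpr ?_) ?_
  · rintro _ ⟨X, hX, _, hY, rfl⟩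
    obtain ⟨a, rfl⟩ := Submodule.mem_span_singleton.mp hY
    refine ⟨a • X, P.smul_mem a hX, ?_⟩
    ext
    simp [kroneckerBilinear, kroneckerMapBilinear, mul_left_comm]
  · rintro _ ⟨X, hX, rfl⟩
    exact Submodule.subset_span ⟨X, hX, Y, Submodule.mem_span_singleton_self Y, rfl⟩

end

lemma kroneckerBilinear_flip_one_eq_reindex {ι κ : Type} [DecidableEq κ] [Unique κ] :
    (kroneckerBilinear (R := ℝ) (α := ℂ)).flip (1 : Matrix κ κ ℂ) =
      (reindexLinearEquiv ℝ ℂ (Equiv.prodUnique ι κ).symm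
        (Equiv.prodUnique ι κ).symm).toLinearMap := by
  ext X ⟨i, k⟩ ⟨j, l⟩
  rw [Subsingleton.elim k default, Subsingleton.elim l default]
  simp [kroneckerBilinear, kroneckerMapBilinear]

instance : Unique (Idx (QT.elem 1)) :=
  inferInstanceAs (Unique (Fin 1))

lemma Delta_elem_one : Delta (QT.elem 1) = ⊥ :=
  tlHermSub_eq_bot

/-- For the dual type `x̄ := x → I` (with `I` the trivial elementary type),
`Δ_{x̄} = Δ̄_x` (the complement of `Δ_x` inside the traceless Hermitian operators
on `H_x`, transported along the canonical identification `H_x ⊗ ℂ ≃ H_x`) and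
`λ_{x̄} = 1/(λ_x d_x)`. -/
theorem delta_lam_dual (x : QT) :
    Delta (QT.arrow x (QT.elem 1)) =
      Submodule.map
        (Matrix.reindexLinearEquiv ℝ ℂ
          (Equiv.prodUnique (Idx x) (Fin 1)).symm
          (Equiv.prodUnique (Idx x) (Fin 1)).symm).toLinearMap
        (perpWithin (Delta x) (tlHermSub (Idx x))) ∧
    lam (QT.arrow x (QT.elem 1)) = 1 / (lam x * Fintype.card (Idx x)) := by
  constructor
  · rw [Delta.eq_2, Delta_elem_one, tensorSub_bot, bot_sup_eq, perpWithin_bot,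
      hermSub_eq_idSub, idSub, tensorSub_span_singleton,
      kroneckerBilinear_flip_one_eq_reindex]
    rfl
  · rw [lam.eq_2, lam.eq_1, Nat.cast_one, div_one, mul_comm]
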